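/- arXiv:0910.1939 — 2 statements merged into one kernel-verified Lean document; each statement's English description precedes it below -/
import Mathlib

section
/- Let Gamma be a weighted tree containing a path u, z_1, ..., z_m, v where m is odd and each z_i has degree 2 in Gamma and weight 0. Then for every integer s, Gamma is birationally equivalent to the weighted tree with the same underlying tree and the same weights, except that the weight of u is increased by s and the weight of v is decreased by s. -/
/-- A weighted graph: a finite simple graph on a finite set of natural-number
vertices, with an integer weight attached to each vertex. -/
structure WGraph where
  verts : Finset ℕ
  adj : ℕ → ℕ → Bool
  symm : ∀ u v, adj u v = true → adj v u = true
  loopless : ∀ v, adj v v = false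
  support : ∀ u v, adj u v = true → u ∈ verts ∧ v ∈ verts
  wt : ℕ → ℤ

namespace WGraph

/-- The degree of a vertex. -/
def deg (G : WGraph) (v : ℕ) : ℕ := (G.verts.filter (fun u => G.adj v u = true)).card

/-- A branching point: a vertex of degree at least `3`. -/
def Branch (G : WGraph) (v : ℕ) : Prop := v ∈ G.verts ∧ 3 ≤ G.deg v

/-- The graph is connected (and nonempty). -/
def Connected (G : WGraph) : Prop :=
  G.verts.Nonempty ∧ ∀ u ∈ G.verts, ∀ v ∈ G.verts,
    Relation.ReflTransGen (fun a b => G.adj a b = true) u v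

/-- A circular graph: a nonempty connected graph all of whose vertices have degree `2`,
i.e. a cycle. -/
def IsCircular (G : WGraph) : Prop :=
  G.verts.Nonempty ∧ G.Connected ∧ ∀ v ∈ G.verts, G.deg v = 2

/-- The set of non-branching vertices. -/
def NB (G : WGraph) : Set ℕ := {v | v ∈ G.verts ∧ G.deg v < 3}

/-- A linear segment: a connected component of the graph obtained by deleting
the branching points. -/
def IsSegment (G : WGraph) (S : Set ℕ) : Prop :=
  ∃ v ∈ G.NB, S = {u | Relation.ReflTransGen
    (fun a b => a ∈ G.NB ∧ b ∈ G.NB ∧ G.adj a b = true) v u}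

/-- `l` is a consecutive enumeration of the linear segment `S`. -/
def SegList (G : WGraph) (S : Set ℕ) (l : List ℕ) : Prop :=
  l.Nodup ∧ (∀ v, v ∈ l ↔ v ∈ S) ∧ l.Chain' (fun a b => G.adj a b = true)

/-- A standard weight sequence: all weights zero, or an even number `2k ≥ 0` of zeros
followed by weights `≤ -2`. -/
def StdSeq (m : List ℤ) : Prop :=
  (∀ x ∈ m, x = 0) ∨
  ∃ (k : ℕ) (ws : List ℤ), m = List.replicate (2 * k) 0 ++ ws ∧ ∀ x ∈ ws, x ≤ -2

/-- A standard weighted graph: connected, and every linear segment, enumerated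
consecutively starting (when the segment is adjacent to exactly one branching point)
from the vertex adjacent to that branching point, has a standard weight sequence. -/
def IsStandard (G : WGraph) : Prop :=
  G.Connected ∧
  ∀ S, G.IsSegment S → ∃ l, G.SegList S l ∧ StdSeq (l.map G.wt) ∧
    ∀ b, G.Branch b → (∃ v ∈ S, G.adj b v = true) →
      (∀ b', G.Branch b' → (∃ v' ∈ S, G.adj b' v' = true) → b' = b) →
      ∃ v0, l.head? = some v0 ∧ G.adj b v0 = true

/-- `G'` is obtained from `G` by the inner blowup at the edge `uv`, creating the
new vertex `x`: the edge `uv` is deleted, `x` gets weight `-1` and is joined to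
`u` and `v`, and the weights of `u` and `v` drop by `1`. -/
def IsInnerBlowup (G G' : WGraph) (u v x : ℕ) : Prop :=
  G.adj u v = true ∧ x ∉ G.verts ∧
  G'.verts = insert x G.verts ∧
  (∀ a b, G'.adj a b = true ↔
    ((G.adj a b = true ∧ ¬(a = u ∧ b = v) ∧ ¬(a = v ∧ b = u)) ∨
     (a = x ∧ (b = u ∨ b = v)) ∨ (b = x ∧ (a = u ∨ a = v)))) ∧
  (∀ a, G'.wt a = if a = x then -1 else if a = u then G.wt a - 1
    else if a = v then G.wt a - 1 else G.wt a)

/-- `G'` is obtained from `G` by the outer blowup at the vertex `v`, creating the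
new vertex `x` of weight `-1` joined only to `v`; the weight of `v` drops by `1`. -/
def IsOuterBlowup (G G' : WGraph) (v x : ℕ) : Prop :=
  v ∈ G.verts ∧ x ∉ G.verts ∧
  G'.verts = insert x G.verts ∧
  (∀ a b, G'.adj a b = true ↔
    (G.adj a b = true ∨ (a = x ∧ b = v) ∨ (b = x ∧ a = v))) ∧
  (∀ a, G'.wt a = if a = x then -1 else if a = v then G.wt a - 1 else G.wt a)

/-- A single blowup. -/
def BlowupStep (G G' : WGraph) : Prop :=
  (∃ u v x, IsInnerBlowup G G' u v x) ∨ (∃ v x, IsOuterBlowup G G' v x)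

/-- A single blowup or blowdown (a blowdown being the inverse of a blowup). -/
def Move (G G' : WGraph) : Prop := BlowupStep G G' ∨ BlowupStep G' G

/-- A weight-preserving isomorphism of weighted graphs. -/
def WIso (G G' : WGraph) : Prop :=
  ∃ f : ℕ → ℕ, Set.BijOn f (G.verts : Set ℕ) (G'.verts : Set ℕ) ∧
    (∀ u ∈ G.verts, ∀ v ∈ G.verts, G'.adj (f u) (f v) = G.adj u v) ∧
    (∀ v ∈ G.verts, G'.wt (f v) = G.wt v)

/-- Birational equivalence of weighted graphs: the equivalence relation generated by
blowups, blowdowns and weight-preserving isomorphisms. -/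
def BirEq : WGraph → WGraph → Prop :=
  Relation.EqvGen (fun G G' => Move G G' ∨ WIso G G')

end WGraph

namespace WGraph

/-- `G` is a tree: a connected graph whose number of edges is one less than its
number of vertices (the sum of all degrees counts each edge twice). -/
def IsTree (G : WGraph) : Prop :=
  G.Connected ∧ ∑ v ∈ G.verts, G.deg v = 2 * (G.verts.card - 1)

end WGraph

/-! Through a vertex `z` of weight `0` whose only neighbours are `a` and `b`, a unit of weight
can be moved from `b` to `a`: blow up the edge `zb`, then blow down `z`, which now has weight `-1`
and neighbours `a` and the new vertex; the new vertex takes over the role of `z`, with weight `0`.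
Moving `s` units across `z₁` from `z₂` to `u` and then, recursively, from `v` to `z₂` along the
odd chain `z₃, …, z_m` leaves the weight of `z₂` unchanged. -/

theorem Equivalence.rel_zero_int_of_succ {α : Type*} {R : α → α → Prop} (hR : Equivalence R)
    (f : ℤ → α) (h : ∀ t, R (f t) (f (t + 1))) (t : ℤ) : R (f 0) (f t) := by
  induction t using Int.induction_on with
  | zero => exact hR.refl _
  | succ i ih => exact hR.trans ih (h i)
  | pred i ih => exact hR.trans ih (hR.symm (by simpa using h (-i - 1)))

namespace WGraph

attribute [ext] WGraph

theorem ne_of_adj {G : WGraph} {a b : ℕ} (h : G.adj a b = true) : a ≠ b := by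
  rintro rfl
  simp [G.loopless] at h

theorem adj_eq_false_of_notMem_left {G : WGraph} {x : ℕ} (hx : x ∉ G.verts) (c : ℕ) :
    G.adj x c = false := by
  cases h : G.adj x c
  · rfl
  · exact absurd (G.support x c h).1 hx

theorem adj_eq_false_of_notMem_right {G : WGraph} {x : ℕ} (hx : x ∉ G.verts) (c : ℕ) :
    G.adj c x = false := by
  cases h : G.adj c x
  · rfl
  · exact absurd (G.support c x h).2 hx

theorem adj_iff_of_deg_eq_two {G : WGraph} {a z b : ℕ} (ha : G.adj z a = true)
    (hb : G.adj z b = true) (hab : a ≠ b) (hdeg : G.deg z = 2) (c : ℕ) :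
    G.adj z c = true ↔ c = a ∨ c = b := by
  have hsub : ({a, b} : Finset ℕ) ⊆ G.verts.filter (fun c => G.adj z c = true) := by
    intro c hc
    rcases Finset.mem_insert.1 hc with rfl | hc
    · exact Finset.mem_filter.2 ⟨(G.support z c ha).2, ha⟩
    · rw [Finset.mem_singleton.1 hc]
      exact Finset.mem_filter.2 ⟨(G.support z b hb).2, hb⟩
  have hnbrs : G.verts.filter (fun c => G.adj z c = true) = {a, b} :=
    (Finset.eq_of_subset_of_card_le hsub (by rw [Finset.card_pair hab]; exact hdeg.le)).symm
  refine ⟨fun hc => ?_, by rintro (rfl | rfl) <;> assumption⟩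
  have hmem : c ∈ G.verts.filter (fun c => G.adj z c = true) :=
    Finset.mem_filter.2 ⟨(G.support z c hc).2, hc⟩
  simpa [hnbrs] using hmem

def moveWt (G : WGraph) (a b : ℕ) (t : ℤ) : WGraph :=
  { G with wt := fun c => if c = a then G.wt c + t else if c = b then G.wt c - t else G.wt c }

section moveWt

variable (G : WGraph) (a b : ℕ) (t : ℤ)

@[simp] theorem moveWt_verts : (G.moveWt a b t).verts = G.verts := rfl
@[simp] theorem moveWt_adj : (G.moveWt a b t).adj = G.adj := rfl

theorem moveWt_wt (c : ℕ) : (G.moveWt a b t).wt c =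
    if c = a then G.wt c + t else if c = b then G.wt c - t else G.wt c := rfl

theorem moveWt_wt_of_ne {c : ℕ} (ha : c ≠ a) (hb : c ≠ b) : (G.moveWt a b t).wt c = G.wt c := by
  simp [moveWt_wt, ha, hb]

@[simp] theorem moveWt_zero : G.moveWt a b 0 = G := by
  ext c <;> simp [moveWt_wt]

theorem moveWt_moveWt (s : ℤ) : (G.moveWt a b s).moveWt a b t = G.moveWt a b (s + t) := by
  ext c <;> simp only [moveWt_verts, moveWt_adj, moveWt_wt]
  split_ifs <;> omega

theorem moveWt_moveWt_of_ne {c : ℕ} (hab : a ≠ b) (hbc : b ≠ c) (hac : a ≠ c) :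
    (G.moveWt a b t).moveWt b c t = G.moveWt a c t := by
  ext d <;> simp only [moveWt_verts, moveWt_adj, moveWt_wt]
  split_ifs <;> omega

end moveWt

def relabel (G : WGraph) (σ : Equiv.Perm ℕ) : WGraph where
  verts := G.verts.map σ.toEmbedding
  adj c d := G.adj (σ.symm c) (σ.symm d)
  symm c d := G.symm _ _
  loopless c := G.loopless _
  support c d h := by simpa [Finset.mem_map_equiv] using G.support _ _ h
  wt c := G.wt (σ.symm c)

@[simp] theorem relabel_adj (G : WGraph) (σ : Equiv.Perm ℕ) (c d : ℕ) :
    (G.relabel σ).adj c d = G.adj (σ.symm c) (σ.symm d) := rfl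

@[simp] theorem relabel_wt (G : WGraph) (σ : Equiv.Perm ℕ) (c : ℕ) :
    (G.relabel σ).wt c = G.wt (σ.symm c) := rfl

@[simp] theorem mem_relabel_verts (G : WGraph) (σ : Equiv.Perm ℕ) (c : ℕ) :
    c ∈ (G.relabel σ).verts ↔ σ.symm c ∈ G.verts := Finset.mem_map_equiv

theorem wIso_relabel (G : WGraph) (σ : Equiv.Perm ℕ) : WIso G (G.relabel σ) := by
  refine ⟨σ, ?_, fun c _ d _ => by simp, fun c _ => by simp⟩
  rw [relabel, Finset.coe_map]
  exact σ.injective.injOn.bijOn_image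

def innerBlowup (G : WGraph) {u v : ℕ} (huv : G.adj u v = true) {x : ℕ} (hx : x ∉ G.verts) :
    WGraph where
  verts := insert x G.verts
  adj c d := decide ((G.adj c d = true ∧ ¬(c = u ∧ d = v) ∧ ¬(c = v ∧ d = u)) ∨
     (c = x ∧ (d = u ∨ d = v)) ∨ (d = x ∧ (c = u ∨ c = v)))
  symm c d h := by
    have := G.symm c d
    simp only [decide_eq_true_eq] at h ⊢
    tauto
  loopless c := by
    have := G.support u v huv
    simp only [G.loopless, decide_eq_false_iff_not]
    rintro (⟨h, -⟩ | ⟨rfl, rfl | rfl⟩ | ⟨rfl, rfl | rfl⟩) <;> simp_all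
  support c d h := by
    have := G.support u v huv
    simp only [decide_eq_true_eq] at h
    simp only [Finset.mem_insert]
    rcases h with ⟨h, -⟩ | ⟨rfl, rfl | rfl⟩ | ⟨rfl, rfl | rfl⟩
    · have := G.support c d h
      tauto
    all_goals tauto
  wt c := if c = x then -1 else if c = u then G.wt c - 1 else if c = v then G.wt c - 1 else G.wt c

@[simp] theorem innerBlowup_verts (G : WGraph) {u v : ℕ} (huv : G.adj u v = true) {x : ℕ}
    (hx : x ∉ G.verts) : (G.innerBlowup huv hx).verts = insert x G.verts := rfl

theorem innerBlowup_wt (G : WGraph) {u v : ℕ} (huv : G.adj u v = true) {x : ℕ}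
    (hx : x ∉ G.verts) (c : ℕ) : (G.innerBlowup huv hx).wt c =
    if c = x then -1 else if c = u then G.wt c - 1 else if c = v then G.wt c - 1 else G.wt c :=
  rfl

theorem innerBlowup_adj (G : WGraph) {u v : ℕ} (huv : G.adj u v = true) {x : ℕ}
    (hx : x ∉ G.verts) (c d : ℕ) : (G.innerBlowup huv hx).adj c d = true ↔
    (G.adj c d = true ∧ ¬(c = u ∧ d = v) ∧ ¬(c = v ∧ d = u)) ∨
     (c = x ∧ (d = u ∨ d = v)) ∨ (d = x ∧ (c = u ∨ c = v)) := decide_eq_true_iff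

theorem isInnerBlowup_innerBlowup (G : WGraph) {u v : ℕ} (huv : G.adj u v = true) {x : ℕ}
    (hx : x ∉ G.verts) : IsInnerBlowup G (G.innerBlowup huv hx) u v x :=
  ⟨huv, hx, rfl, fun _ _ => decide_eq_true_iff, fun _ => rfl⟩

theorem isInnerBlowup_relabel_moveWt {G : WGraph} {a z b x : ℕ} (haz : G.adj a z = true)
    (hzb : G.adj z b = true) (hab : a ≠ b) (hdeg : G.deg z = 2) (hwt : G.wt z = 0)
    (hx : x ∉ G.verts) :
    IsInnerBlowup ((G.moveWt a b 1).relabel (Equiv.swap z x)) (G.innerBlowup hzb hx) a x z := by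
  have hza : G.adj z a = true := G.symm a z haz
  have hnbr := adj_iff_of_deg_eq_two hza hzb hab hdeg
  have hnbr' (c : ℕ) : G.adj c z = true ↔ c = a ∨ c = b :=
    ⟨fun h => (hnbr c).1 (G.symm c z h), fun h => G.symm z c ((hnbr c).2 h)⟩
  have hzv : z ∈ G.verts := (G.support a z haz).2
  have hxa : x ≠ a := fun h => hx (h ▸ (G.support a z haz).1)
  have hxb : x ≠ b := fun h => hx (h ▸ (G.support z b hzb).2)
  have haz' : a ≠ z := ne_of_adj haz
  have hbz : b ≠ z := (ne_of_adj hzb).symm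
  have hxc := adj_eq_false_of_notMem_left hx
  have hcx := adj_eq_false_of_notMem_right hx
  refine ⟨?_, ?_, ?_, ?_, ?_⟩
  · simpa [Equiv.swap_apply_of_ne_of_ne haz' hxa.symm] using haz
  · simpa using hx
  · ext c
    by_cases hcz : c = z
    · simp [hcz, hzv]
    by_cases hcx : c = x
    · simp [hcx, hzv]
    simp [Equiv.swap_apply_of_ne_of_ne hcz hcx, hcz, hcx]
  · intro c d
    simp only [innerBlowup_adj, relabel_adj, Equiv.symm_swap, Equiv.swap_apply_def, moveWt_adj]
    split_ifs <;> grind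
  · intro c
    simp only [innerBlowup_wt, relabel_wt, Equiv.symm_swap, Equiv.swap_apply_def, moveWt_wt]
    split_ifs <;> grind

theorem birEq_equivalence : Equivalence BirEq := Relation.EqvGen.is_equivalence _

theorem Move.birEq {G G' : WGraph} (h : Move G G') : BirEq G G' :=
  .rel _ _ (.inl h)

theorem WIso.birEq {G G' : WGraph} (h : WIso G G') : BirEq G G' :=
  .rel _ _ (.inr h)

theorem birEq_moveWt_one_of_deg_eq_two {G : WGraph} {a z b : ℕ} (haz : G.adj a z = true)
    (hzb : G.adj z b = true) (hab : a ≠ b) (hdeg : G.deg z = 2) (hwt : G.wt z = 0) :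
    BirEq G (G.moveWt a b 1) := by
  obtain ⟨x, hx⟩ := Infinite.exists_notMem_finset G.verts
  have hblowup : Move G (G.innerBlowup hzb hx) :=
    .inl (.inl ⟨z, b, x, isInnerBlowup_innerBlowup G hzb hx⟩)
  have hblowdown : Move (G.innerBlowup hzb hx) ((G.moveWt a b 1).relabel (Equiv.swap z x)) :=
    .inr (.inl ⟨a, x, z, isInnerBlowup_relabel_moveWt haz hzb hab hdeg hwt hx⟩)
  exact birEq_equivalence.trans (birEq_equivalence.trans hblowup.birEq hblowdown.birEq)
    (birEq_equivalence.symm (wIso_relabel _ _).birEq)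

theorem birEq_moveWt_of_deg_eq_two {G : WGraph} {a z b : ℕ} (haz : G.adj a z = true)
    (hzb : G.adj z b = true) (hab : a ≠ b) (hdeg : G.deg z = 2) (hwt : G.wt z = 0) (t : ℤ) :
    BirEq G (G.moveWt a b t) := by
  have hstep (t : ℤ) : BirEq (G.moveWt a b t) (G.moveWt a b (t + 1)) := by
    rw [← moveWt_moveWt]
    refine birEq_moveWt_one_of_deg_eq_two haz hzb hab hdeg ?_
    rwa [moveWt_wt_of_ne _ _ _ _ (ne_of_adj haz).symm (ne_of_adj hzb)]
  simpa using birEq_equivalence.rel_zero_int_of_succ _ hstep t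

theorem birEq_moveWt_of_odd_chain (t : ℤ) : ∀ (G : WGraph) (u v : ℕ) (zs : List ℕ),
    Odd zs.length → (u :: (zs ++ [v])).Nodup →
    (u :: (zs ++ [v])).IsChain (fun a b => G.adj a b = true) →
    (∀ z ∈ zs, G.deg z = 2 ∧ G.wt z = 0) → BirEq G (G.moveWt u v t)
  | _, _, _, [], hodd, _, _, _ => by simp at hodd
  | G, u, v, [z], _, hnd, hch, hz => by
    simp only [List.cons_append, List.nil_append, List.isChain_cons_cons,
      List.isChain_singleton, and_true] at hch
    have huv : u ≠ v := fun h => (List.nodup_cons.1 hnd).1 (by simp [h])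
    exact birEq_moveWt_of_deg_eq_two hch.1 hch.2 huv (hz z (by simp)).1 (hz z (by simp)).2 t
  | G, u, v, z₁ :: z₂ :: zs, hodd, hnd, hch, hz => by
    simp only [List.cons_append, List.isChain_cons_cons] at hch
    have hdistinct := hnd
    simp only [List.cons_append, List.nodup_cons, List.mem_cons, List.mem_append, not_or]
      at hdistinct
    have hmove := birEq_moveWt_of_deg_eq_two hch.1 hch.2.1 (by tauto)
      (hz z₁ (by simp)).1 (hz z₁ (by simp)).2 t
    have hrest := birEq_moveWt_of_odd_chain t (G.moveWt u z₂ t) z₂ v zs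
      (by simpa [parity_simps] using hodd) hnd.of_cons.of_cons hch.2.2 (by
        intro z hzs
        refine ⟨(hz z (by simp [hzs])).1, ?_⟩
        rw [moveWt_wt_of_ne _ _ _ _ (by rintro rfl; tauto) (by rintro rfl; tauto)]
        exact (hz z (by simp [hzs])).2)
    rw [moveWt_moveWt_of_ne _ _ _ _ (by tauto) (by tauto) (by tauto)] at hrest
    exact birEq_equivalence.trans hmove hrest

end WGraph

open WGraph in
theorem birEq_move_weight_along_odd_zero_chain_general
    (Γ : WGraph) (u v : ℕ) (zs : List ℕ)
    (hodd : Odd zs.length)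
    (hnd : (u :: (zs ++ [v])).Nodup)
    (hch : (u :: (zs ++ [v])).Chain' (fun a b => Γ.adj a b = true))
    (hz : ∀ z ∈ zs, Γ.deg z = 2 ∧ Γ.wt z = 0)
    (s : ℤ) (Γ' : WGraph)
    (hverts : Γ'.verts = Γ.verts)
    (hadj : ∀ a b, Γ'.adj a b = Γ.adj a b)
    (hwt : ∀ a, Γ'.wt a =
      if a = u then Γ.wt a + s else if a = v then Γ.wt a - s else Γ.wt a) :
    BirEq Γ Γ' := by
  have hΓ' : Γ' = Γ.moveWt u v s := WGraph.ext hverts (funext₂ hadj) (funext hwt)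
  rw [hΓ']
  exact birEq_moveWt_of_odd_chain s Γ u v zs hodd hnd hch hz

open WGraph in
/-- moving weight along an odd chain of zeros: let `Γ` be a
weighted tree containing a path `u, z₁, …, z_m, v` where `m` is odd and each `zᵢ`
has degree `2` in `Γ` and weight `0`. Then for every integer `s`, `Γ` is birationally
equivalent to the weighted tree with the same underlying tree and the same weights,
except that the weight of `u` is increased by `s` and the weight of `v` is decreased
by `s`. -/
theorem birEq_move_weight_along_odd_zero_chain
    (Γ : WGraph) (hT : Γ.IsTree) (u v : ℕ) (zs : List ℕ)
    (hodd : Odd zs.length)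
    (hnd : (u :: (zs ++ [v])).Nodup)
    (hch : (u :: (zs ++ [v])).Chain' (fun a b => Γ.adj a b = true))
    (hz : ∀ z ∈ zs, Γ.deg z = 2 ∧ Γ.wt z = 0)
    (s : ℤ) (Γ' : WGraph)
    (hverts : Γ'.verts = Γ.verts)
    (hadj : ∀ a b, Γ'.adj a b = Γ.adj a b)
    (hwt : ∀ a, Γ'.wt a =
      if a = u then Γ.wt a + s else if a = v then Γ.wt a - s else Γ.wt a) :
    BirEq Γ Γ' :=
  birEq_move_weight_along_odd_zero_chain_general Γ u v zs hodd hnd hch hz s Γ' hverts hadj hwt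
end

section
/- For every k >= 0, every n >= 0, and all integers w_1, ..., w_n <= -2, the list (0,...,0 (2k zeros), w_1, ..., w_n) is linearly birationally equivalent to the list (0,...,0 (2k zeros), w_n, ..., w_1); that is, the reversion of a standard linear weighted graph is realized by a birational transformation. -/
/-- A single move on a linear weighted graph, viewed as the list of its integer
weights listed consecutively: an inner blowup at an edge between consecutive
entries `a, b` (replacing `(a, b)` by `(a-1, -1, b-1)`), an outer blowup at the
left end (replacing the end entry `a` by `(-1, a-1)`), or a reversal of the chain.
Blowdowns are the inverses of these moves. -/
inductive LinMove : List ℤ → List ℤ → Prop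
  | inner (p q : List ℤ) (a b : ℤ) :
      LinMove (p ++ a :: b :: q) (p ++ (a - 1) :: (-1) :: (b - 1) :: q)
  | outer (a : ℤ) (q : List ℤ) :
      LinMove (a :: q) ((-1) :: (a - 1) :: q)
  | rev (l : List ℤ) : LinMove l l.reverse

/-- Linear birational equivalence of chains of weights: the equivalence relation
generated by blowups, blowdowns (all intermediate graphs being chains) and
reversals. -/
def LinBirEq : List ℤ → List ℤ → Prop := Relation.EqvGen LinMove

/-!
A `0`-vertex lets weight flow across it: `(a, 0, b)` and `(a + 1, 0, b - 1)` both arise from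
`(a, -1, -1, b - 1)` by blowing down one of the two `-1`s. Taking `a = 0` and transferring all of
`b = c`, a pair of zeros slides past any entry, `(0, 0, c) ~ (c, 0, 0)`, so a block of `2k` zeros
commutes with every chain. Reversing `(0^{2k}, w)` gives `(w^rev, 0^{2k})`, and sliding the zeros
back to the front gives `(0^{2k}, w^rev)`.
-/

namespace LinBirEq

theorem of_linMove {l l' : List ℤ} (h : LinMove l l') : LinBirEq l l' :=
  Relation.EqvGen.rel _ _ h

theorem refl (l : List ℤ) : LinBirEq l l := Relation.EqvGen.refl l

theorem symm {l l' : List ℤ} (h : LinBirEq l l') : LinBirEq l' l := Relation.EqvGen.symm _ _ h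

theorem trans {l₁ l₂ l₃ : List ℤ} (h : LinBirEq l₁ l₂) (h' : LinBirEq l₂ l₃) :
    LinBirEq l₁ l₃ :=
  Relation.EqvGen.trans _ _ _ h h'

theorem reverse (l : List ℤ) : LinBirEq l l.reverse := of_linMove (LinMove.rev l)

theorem shift_weight_across_zero (p q : List ℤ) (a b : ℤ) :
    LinBirEq (p ++ a :: 0 :: b :: q) (p ++ (a + 1) :: 0 :: (b - 1) :: q) := by
  have blowup_right : LinMove (p ++ a :: 0 :: b :: q) (p ++ a :: (-1) :: (-1) :: (b - 1) :: q) := by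
    simpa using LinMove.inner (p ++ [a]) q 0 b
  have blowup_left :
      LinMove (p ++ (a + 1) :: 0 :: (b - 1) :: q) (p ++ a :: (-1) :: (-1) :: (b - 1) :: q) := by
    simpa using LinMove.inner p ((b - 1) :: q) (a + 1) 0
  exact (of_linMove blowup_right).trans (of_linMove blowup_left).symm

theorem shift_weight_across_zero_by (t : ℤ) (p q : List ℤ) (a b : ℤ) :
    LinBirEq (p ++ a :: 0 :: b :: q) (p ++ (a + t) :: 0 :: (b - t) :: q) := by
  induction t using Int.induction_on with
  | zero => simpa using refl _
  | succ t ih =>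
    rw [← add_assoc, sub_add_eq_sub_sub]
    exact ih.trans (shift_weight_across_zero p q (a + t) (b - t))
  | pred t ih =>
    have step := shift_weight_across_zero p q (a + (-t - 1)) (b - (-t - 1))
    rw [show a + (-t - 1) + 1 = a + -t by ring, show b - (-t - 1) - 1 = b - -t by ring] at step
    exact ih.trans step.symm

theorem zero_zero_cons_swap (p q : List ℤ) (c : ℤ) :
    LinBirEq (p ++ 0 :: 0 :: c :: q) (p ++ c :: 0 :: 0 :: q) := by
  simpa using shift_weight_across_zero_by c p q 0 c

theorem zero_zero_append_slide (u p : List ℤ) :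
    LinBirEq (p ++ 0 :: 0 :: u) (p ++ u ++ [0, 0]) := by
  induction u generalizing p with
  | nil => simpa using refl _
  | cons c u ih =>
    have slid := ih (p ++ [c])
    simp only [List.append_assoc, List.singleton_append] at slid
    exact (zero_zero_cons_swap p u c).trans (by simpa using slid)

theorem replicate_even_zero_append_comm (k : ℕ) (u : List ℤ) :
    LinBirEq (List.replicate (2 * k) 0 ++ u) (u ++ List.replicate (2 * k) 0) := by
  induction k generalizing u with
  | zero => simpa using refl u
  | succ k ih =>
    have zeros_left :
        List.replicate (2 * (k + 1)) (0 : ℤ) = [0, 0] ++ List.replicate (2 * k) 0 := by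
      rw [Nat.mul_succ, Nat.add_comm, List.replicate_add]
      rfl
    have split_zeros :
        List.replicate (2 * (k + 1)) 0 ++ u = List.replicate (2 * k) 0 ++ 0 :: 0 :: u := by
      simp [Nat.mul_succ, List.replicate_add]
    have moved := ih (u ++ [0, 0])
    rw [List.append_assoc, ← zeros_left] at moved
    rw [split_zeros]
    exact (zero_zero_append_slide u _).trans (by simpa using moved)

theorem replicate_even_zero_append_reverse (k : ℕ) (u : List ℤ) :
    LinBirEq (List.replicate (2 * k) 0 ++ u) (List.replicate (2 * k) 0 ++ u.reverse) := by
  have reversed := reverse (List.replicate (2 * k) 0 ++ u)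
  rw [List.reverse_append, List.reverse_replicate] at reversed
  exact reversed.trans (replicate_even_zero_append_comm k _).symm

end LinBirEq

theorem standard_chain_linBirEq_reversion_general (k n : ℕ) (w : Fin n → ℤ) :
    LinBirEq (List.replicate (2 * k) 0 ++ List.ofFn w)
      (List.replicate (2 * k) 0 ++ (List.ofFn w).reverse) :=
  LinBirEq.replicate_even_zero_append_reverse k (List.ofFn w)

/-- the reversion of a standard chain is birational: for every
`k ≥ 0`, every `n ≥ 0` and all integers `w₁, …, wₙ ≤ -2`, the chain
`(0,…,0 (2k zeros), w₁, …, wₙ)` is linearly birationally equivalent to the chain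
`(0,…,0 (2k zeros), wₙ, …, w₁)`. -/
theorem standard_chain_linBirEq_reversion (k n : ℕ) (w : Fin n → ℤ)
    (hw : ∀ i, w i ≤ -2) :
    LinBirEq (List.replicate (2 * k) 0 ++ List.ofFn w)
      (List.replicate (2 * k) 0 ++ (List.ofFn w).reverse) :=
  standard_chain_linBirEq_reversion_general k n w
end
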